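/- For every i ≥ 1 one has d_i ≥ i!, and for every i ≥ 2 the inequality is strict: d_i > i!. -/
import Mathlib


def evenSum (d : ℕ → ℤ) (n : ℕ) : ℤ := ∑ j ∈ Finset.Icc 1 n, if Even j then d j else 0

def oddSum (d : ℕ → ℤ) (n : ℕ) : ℤ := ∑ j ∈ Finset.Icc 1 n, if Odd j then d j else 0

/-- The pair of sequences `(o, d)` (indexed from 1) satisfies the recursive definition:
`o 1 = -1`, `o 2 = 2`, `d 1 = 1`, and for `i ≥ 2`:
`o (i+1) = o (i-1) + i·(d 2 + d 4 + ⋯ + d (i-1))` if `i` is odd,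
`o (i+1) = o (i-1) - i·(d 1 + d 3 + ⋯ + d (i-1))` if `i` is even,
and `d i = i·|o i − o (i+1)|`. -/
def IsOD (o d : ℕ → ℤ) : Prop :=
  o 1 = -1 ∧ o 2 = 2 ∧ d 1 = 1 ∧
  (∀ i : ℕ, 2 ≤ i → Odd i → o (i + 1) = o (i - 1) + (i : ℤ) * evenSum d (i - 1)) ∧
  (∀ i : ℕ, 2 ≤ i → Even i → o (i + 1) = o (i - 1) - (i : ℤ) * oddSum d (i - 1)) ∧
  (∀ i : ℕ, 2 ≤ i → d i = (i : ℤ) * |o i - o (i + 1)|)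

lemma le_oddSum (d : ℕ → ℤ) (n : ℕ) (h1 : 1 ≤ n) (h2 : Odd n)
    (hpos : ∀ j, 1 ≤ j → j ≤ n → 0 ≤ d j) : d n ≤ oddSum d n := by
  have := Finset.single_le_sum (f := fun j => if Odd j then d j else 0)
    (s := Finset.Icc 1 n) (fun j hj => by
      rw [Finset.mem_Icc] at hj
      by_cases hj' : Odd j
      · simpa [hj'] using hpos j hj.1 hj.2
      · simp [hj']) (Finset.mem_Icc.mpr ⟨h1, le_rfl⟩)
  simpa [oddSum, h2] using this

lemma le_evenSum (d : ℕ → ℤ) (n : ℕ) (h1 : 1 ≤ n) (h2 : Even n)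
    (hpos : ∀ j, 1 ≤ j → j ≤ n → 0 ≤ d j) : d n ≤ evenSum d n := by
  have := Finset.single_le_sum (f := fun j => if Even j then d j else 0)
    (s := Finset.Icc 1 n) (fun j hj => by
      rw [Finset.mem_Icc] at hj
      by_cases hj' : Even j
      · simpa [hj'] using hpos j hj.1 hj.2
      · simp [hj']) (Finset.mem_Icc.mpr ⟨h1, le_rfl⟩)
  simpa [evenSum, h2] using this

lemma key (o d : ℕ → ℤ) (h : IsOD o d) : ∀ i : ℕ, 1 ≤ i →
    (Odd i → o i < 0) ∧ (Even i → 0 < o i) ∧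
    (Odd (i + 1) → o (i + 1) < 0) ∧ (Even (i + 1) → 0 < o (i + 1)) ∧
    ((Nat.factorial i : ℤ) ≤ d i) ∧ (2 ≤ i → (Nat.factorial i : ℤ) < d i) := by
  obtain ⟨ho1, ho2, hd1, hodd, heven, hd⟩ := h
  intro i
  induction i using Nat.strong_induction_on with
  | _ i IH =>
  intro hi
  match i, hi with
  | 1, _ =>
    refine ⟨fun _ => by rw [ho1]; norm_num, fun he => by norm_num at he,
      fun hc => absurd hc (by decide), fun _ => by rw [ho2]; norm_num, ?_, by omega⟩
    simp [hd1, Nat.factorial]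
  | (m + 2), _ =>
    have hI : ∀ j, 1 ≤ j → j ≤ m + 1 → (Nat.factorial j : ℤ) ≤ d j :=
      fun j h1 h2 => (IH j (by omega) h1).2.2.2.2.1
    have hpos : ∀ j, 1 ≤ j → j ≤ m + 1 → 0 ≤ d j :=
      fun j h1 h2 => le_trans (Int.natCast_nonneg _) (hI j h1 h2)
    have IHm := IH (m + 1) (by omega) (by omega)
    have hFm : (1 : ℤ) ≤ (Nat.factorial (m + 1) : ℤ) := by
      exact_mod_cast Nat.one_le_iff_ne_zero.mpr (Nat.factorial_ne_zero _)
    have hdm : (Nat.factorial (m + 1) : ℤ) ≤ d (m + 1) := hI (m + 1) (by omega) le_rfl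
    have hFcast : (Nat.factorial (m + 2) : ℤ) = ((m : ℤ) + 2) * (Nat.factorial (m + 1) : ℤ) := by
      rw [Nat.factorial_succ]; push_cast; ring
    have hdi := hd (m + 2) (by omega)
    rcases Nat.even_or_odd m with hm | hm
    · -- m even, i = m+2 even
      have hOm1 : Odd (m + 1) := Even.add_one hm
      have hEm2 : Even (m + 2) := by obtain ⟨k, hk⟩ := hm; exact ⟨k + 1, by omega⟩
      have hOm3 : Odd (m + 3) := Even.add_one hEm2
      have hS : d (m + 1) ≤ oddSum d (m + 1) := le_oddSum d (m + 1) (by omega) hOm1 hpos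
      have hrec := heven (m + 2) (by omega) hEm2
      rw [show m + 2 - 1 = m + 1 from rfl] at hrec
      have hoprev : o (m + 1) < 0 := IHm.1 hOm1
      have hoi : 0 < o (m + 2) := IHm.2.2.2.1 hEm2
      have hcast : ((m + 2 : ℕ) : ℤ) = (m : ℤ) + 2 := by push_cast; ring
      rw [hcast] at hrec hdi
      have hmul : ((m : ℤ) + 2) * (Nat.factorial (m + 1) : ℤ) ≤
          ((m : ℤ) + 2) * oddSum d (m + 1) :=
        mul_le_mul_of_nonneg_left (le_trans hdm hS) (by positivity)
      have hmF : ((m : ℤ) + 2) * 1 ≤ ((m : ℤ) + 2) * (Nat.factorial (m + 1) : ℤ) :=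
        mul_le_mul_of_nonneg_left hFm (by positivity)
      have honext : o (m + 3) < 0 := by
        rw [show m + 3 = m + 2 + 1 from rfl, hrec]; linarith
      have hnb : ((m : ℤ) + 2) * (Nat.factorial (m + 1) : ℤ) ≤ -o (m + 2 + 1) := by
        rw [hrec]; linarith
      have habs : |o (m + 2) - o (m + 2 + 1)| = o (m + 2) - o (m + 2 + 1) :=
        abs_of_pos (by linarith)
      rw [habs] at hdi
      have h1 : (1 : ℤ) ≤ o (m + 2) := hoi
      have h3 : ((m : ℤ) + 2) * (((m : ℤ) + 2) * (Nat.factorial (m + 1) : ℤ) + 1) ≤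
          d (m + 2) := by
        rw [hdi]; exact mul_le_mul_of_nonneg_left (by linarith) (by positivity)
      have h4 : ((m : ℤ) + 2) * (Nat.factorial (m + 1) : ℤ) <
          ((m : ℤ) + 2) * (((m : ℤ) + 2) * (Nat.factorial (m + 1) : ℤ) + 1) := by
        nlinarith [hFm]
      refine ⟨fun hc => absurd hEm2 (Nat.not_even_iff_odd.mpr hc), fun _ => hoi,
        fun _ => honext, fun hc => absurd hOm3 (Nat.not_odd_iff_even.mpr hc), ?_, fun _ => ?_⟩
      · rw [hFcast]; linarith
      · rw [hFcast]; linarith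
    · -- m odd, i = m+2 odd
      have hEm1 : Even (m + 1) := Odd.add_one hm
      have hOm2 : Odd (m + 2) := Even.add_one hEm1
      have hEm3 : Even (m + 3) := by obtain ⟨k, hk⟩ := hEm1; exact ⟨k + 1, by omega⟩
      have hS : d (m + 1) ≤ evenSum d (m + 1) := le_evenSum d (m + 1) (by omega) hEm1 hpos
      have hrec := hodd (m + 2) (by omega) hOm2
      rw [show m + 2 - 1 = m + 1 from rfl] at hrec
      have hoprev : 0 < o (m + 1) := IHm.2.1 hEm1
      have hoi : o (m + 2) < 0 := IHm.2.2.1 hOm2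
      have hcast : ((m + 2 : ℕ) : ℤ) = (m : ℤ) + 2 := by push_cast; ring
      rw [hcast] at hrec hdi
      have hmul : ((m : ℤ) + 2) * (Nat.factorial (m + 1) : ℤ) ≤
          ((m : ℤ) + 2) * evenSum d (m + 1) :=
        mul_le_mul_of_nonneg_left (le_trans hdm hS) (by positivity)
      have hmF : ((m : ℤ) + 2) * 1 ≤ ((m : ℤ) + 2) * (Nat.factorial (m + 1) : ℤ) :=
        mul_le_mul_of_nonneg_left hFm (by positivity)
      have honext : 0 < o (m + 3) := by
        rw [show m + 3 = m + 2 + 1 from rfl, hrec]; linarith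
      have hnb : ((m : ℤ) + 2) * (Nat.factorial (m + 1) : ℤ) ≤ o (m + 2 + 1) := by
        rw [hrec]; linarith
      have habs : |o (m + 2) - o (m + 2 + 1)| = -(o (m + 2) - o (m + 2 + 1)) :=
        abs_of_neg (by linarith)
      rw [habs] at hdi
      have h1 : o (m + 2) ≤ -1 := by omega
      have h3 : ((m : ℤ) + 2) * (((m : ℤ) + 2) * (Nat.factorial (m + 1) : ℤ) + 1) ≤
          d (m + 2) := by
        rw [hdi]; exact mul_le_mul_of_nonneg_left (by linarith) (by positivity)
      have h4 : ((m : ℤ) + 2) * (Nat.factorial (m + 1) : ℤ) <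
          ((m : ℤ) + 2) * (((m : ℤ) + 2) * (Nat.factorial (m + 1) : ℤ) + 1) := by
        nlinarith [hFm]
      refine ⟨fun _ => hoi, fun hc => absurd hOm2 (Nat.not_odd_iff_even.mpr hc),
        fun hc => absurd hEm3 (Nat.not_even_iff_odd.mpr hc), fun _ => honext, ?_, fun _ => ?_⟩
      · rw [hFcast]; linarith
      · rw [hFcast]; linarith

/-- For every `i ≥ 1` one has `d i ≥ i!`, and for every `i ≥ 2` the inequality is strict. -/
theorem stmt_1 (o d : ℕ → ℤ) (h : IsOD o d) :
    (∀ i : ℕ, 1 ≤ i → (Nat.factorial i : ℤ) ≤ d i) ∧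
    (∀ i : ℕ, 2 ≤ i → (Nat.factorial i : ℤ) < d i) := by
  refine ⟨fun i hi => (key o d h i hi).2.2.2.2.1, fun i hi => (key o d h i (by omega)).2.2.2.2.2 hi⟩
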